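/- The full L-level Paired Pyramid transform is injective (lossless): if two images of size 2^a × 2^a with values in Fin K produce the same coarsest component I_L and the same fine components F_1, …, F_L under iterated row/column modulo-difference subsampling, then the images are equal. -/
import Mathlib


/-- Coarse component of one row-subsampling step: keep the even-indexed rows. -/
def rowCoarse (K : ℕ) (I : ℕ × ℕ → ZMod K) : ℕ × ℕ → ZMod K :=
  fun p => I (2 * p.1, p.2)

/-- Fine component of one row-subsampling step: modulo-`K` difference of the
odd-indexed rows with the even-indexed rows. -/
def rowFine (K : ℕ) (I : ℕ × ℕ → ZMod K) : ℕ × ℕ → ZMod K :=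
  fun p => I (2 * p.1 + 1, p.2) - I (2 * p.1, p.2)

/-- Coarse component of one column-subsampling step. -/
def colCoarse (K : ℕ) (I : ℕ × ℕ → ZMod K) : ℕ × ℕ → ZMod K :=
  fun p => I (p.1, 2 * p.2)

/-- Fine component of one column-subsampling step. -/
def colFine (K : ℕ) (I : ℕ × ℕ → ZMod K) : ℕ × ℕ → ZMod K :=
  fun p => I (p.1, 2 * p.2 + 1) - I (p.1, 2 * p.2)

/-- Coarse component at level `i` of the Paired Pyramid, obtained by
alternating row/column subsampling starting with rows at level 1. -/
def pyrCoarse (K : ℕ) : ℕ → (ℕ × ℕ → ZMod K) → (ℕ × ℕ → ZMod K)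
  | 0 => id
  | (i + 1) => fun I =>
      (if i % 2 = 0 then rowCoarse K else colCoarse K) (pyrCoarse K i I)

/-- Fine component at level `i ≥ 1` of the Paired Pyramid: the modulo-`K`
difference recorded when subsampling the coarse component of level `i − 1`. -/
def pyrFine (K : ℕ) (i : ℕ) (I : ℕ × ℕ → ZMod K) : ℕ × ℕ → ZMod K :=
  (if (i - 1) % 2 = 0 then rowFine K else colFine K) (pyrCoarse K (i - 1) I)

theorem row_inj (K : ℕ) (I J : ℕ × ℕ → ZMod K)
    (hc : rowCoarse K I = rowCoarse K J) (hf : rowFine K I = rowFine K J) :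
    I = J := by
  funext p
  obtain ⟨n, m⟩ := p
  rcases Nat.even_or_odd n with ⟨q, hq⟩ | ⟨q, hq⟩
  · have := congrFun hc (q, m)
    simpa [rowCoarse, hq, two_mul] using this
  · have h1 := congrFun hc (q, m)
    have h2 := congrFun hf (q, m)
    simp only [rowCoarse, rowFine] at h1 h2
    have : I (2 * q + 1, m) = J (2 * q + 1, m) := by
      have := sub_eq_sub_iff_add_eq_add.mp h2
      rw [h1] at this
      exact add_right_cancel this
    simpa [hq] using this

theorem col_inj (K : ℕ) (I J : ℕ × ℕ → ZMod K)
    (hc : colCoarse K I = colCoarse K J) (hf : colFine K I = colFine K J) :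
    I = J := by
  funext p
  obtain ⟨n, m⟩ := p
  rcases Nat.even_or_odd m with ⟨q, hq⟩ | ⟨q, hq⟩
  · have := congrFun hc (n, q)
    simpa [colCoarse, hq, two_mul] using this
  · have h1 := congrFun hc (n, q)
    have h2 := congrFun hf (n, q)
    simp only [colCoarse, colFine] at h1 h2
    have : I (n, 2 * q + 1) = J (n, 2 * q + 1) := by
      have := sub_eq_sub_iff_add_eq_add.mp h2
      rw [h1] at this
      exact add_right_cancel this
    simpa [hq] using this

/-- The full `L`-level Paired Pyramid transform is injective (lossless):
if two images of size `2^a × 2^a` with values in `ZMod K` (pixel values in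
`{0,…,K−1}`) produce the same coarsest component `I_L` and the same fine
components `F_1, …, F_L` under iterated row/column modulo-difference
subsampling, then the images are equal. -/
theorem stmt_7 (K a L : ℕ) [NeZero K] (hK : 1 ≤ K) (hL : L ≤ 2 * a)
    (I J : ℕ × ℕ → ZMod K)
    (hcoarse : pyrCoarse K L I = pyrCoarse K L J)
    (hfine : ∀ i, 1 ≤ i → i ≤ L → pyrFine K i I = pyrFine K i J) :
    I = J := by
  clear hL hK
  induction L with
  | zero => simpa [pyrCoarse] using hcoarse
  | succ n ih =>
    apply ih
    · have hf := hfine (n + 1) (by omega) le_rfl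
      simp only [pyrFine, Nat.add_sub_cancel] at hf
      simp only [pyrCoarse] at hcoarse
      by_cases h : n % 2 = 0 <;> simp [h] at hf hcoarse ⊢
      · exact row_inj K _ _ hcoarse hf
      · exact col_inj K _ _ hcoarse hf
    · intro i h1 h2
      exact hfine i h1 (by omega)
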